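/- For n ≥ 3, pairwise distinct indices i, j, h, and any a, b, c in an associative ring R with 1, one has the identity [t_{hi}(c), y_{ij}(a,b)] = t_{hi}(cab)·t_{hj}(-caba) in GL(n,R), where y_{ij}(a,b) = [t_{ij}(a), t_{ji}(b)]. -/

import Mathlib

open Matrix
open scoped commutatorElement

/-- `GL(n,R)` over an associative ring `R` with `1`, as units of the matrix ring. -/
abbrev GLn (n : ℕ) (R : Type*) [Ring R] := (Matrix (Fin n) (Fin n) R)ˣ

/-- The elementary transvection `t_{ij}(c) = e + c·e_{ij}`, for `i ≠ j`. -/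
def t {R : Type*} [Ring R] {n : ℕ} (i j : Fin n) (hij : i ≠ j) (c : R) :
    GLn n R :=
  ⟨1 + Matrix.single i j c, 1 - Matrix.single i j c,
   by
    have h0 : single i j c * single i j c = 0 :=
      Matrix.single_mul_single_of_ne _ _ _ _ hij.symm _
    noncomm_ring
    simp [h0],
   by
    have h0 : single i j c * single i j c = 0 :=
      Matrix.single_mul_single_of_ne _ _ _ _ hij.symm _
    noncomm_ring
    simp [h0]⟩

theorem stdBasisMatrix_neg' {R : Type*} [Ring R] {n : ℕ} (i j : Fin n) (x : R) :
    single i j (-x) = - single i j x := by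
  apply eq_neg_of_add_eq_zero_left
  rw [← single_add]
  simp

set_option maxHeartbeats 1000000 in
theorem inner_comm_val {R : Type*} [Ring R] {n : ℕ} (i j : Fin n)
    (hij : i ≠ j) (a b : R) :
    (1 + single i j a) * (1 + single j i b) *
      (1 - single i j a) * (1 - single j i b) =
    1 + single i i (a*b) + single i i (a*(b*(a*b)))
      - single j j (b*a) - single i j (a*(b*a)) + single j i (b*(a*b)) := by
  have hji := hij.symm
  noncomm_ring
  simp only [single_mul_single_same, single_mul_single_of_ne, hij, hji, ne_eq, not_false_iff,
    mul_zero, zero_mul, mul_one, one_mul, add_zero, zero_add, sub_zero, mul_assoc]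
  abel

set_option maxHeartbeats 2000000 in
theorem outer_comm_val {R : Type*} [Ring R] {n : ℕ} (i j h : Fin n)
    (hij : i ≠ j) (hhi : h ≠ i) (hhj : h ≠ j) (a b c : R) :
    (1 + single h i c) *
      (1 + single i i (a*b) + single i i (a*(b*(a*b)))
        - single j j (b*a) - single i j (a*(b*a)) + single j i (b*(a*b))) *
      (1 - single h i c) *
      (1 + single j j (b*a) + single j j (b*(a*(b*a)))
        - single i i (a*b) - single j i (b*(a*b)) + single i j (a*(b*a))) =
    (1 + single h i (c*a*b)) * (1 + single h j (-(c*a*b*a))) := by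
  have hji := hij.symm
  have hih := hhi.symm
  have hjh := hhj.symm
  noncomm_ring
  simp only [single_mul_single_same, single_mul_single_of_ne, hij, hji, hhi, hhj, hih, hjh,
    ne_eq, not_false_iff, mul_zero, zero_mul, mul_one, one_mul, add_zero, zero_add, sub_zero,
    mul_assoc, mul_neg, neg_mul, neg_neg, stdBasisMatrix_neg', ← smul_single,
    mul_smul_comm, smul_mul_assoc, smul_zero]
  abel

theorem stmt3 {R : Type*} [Ring R] {n : ℕ} (hn : 3 ≤ n) (i j h : Fin n)
    (hij : i ≠ j) (hhi : h ≠ i) (hhj : h ≠ j) (a b c : R) :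
    ⁅t h i hhi c, ⁅t i j hij a, t j i hij.symm b⁆⁆ =
      t h i hhi (c * a * b) * t h j hhj (-(c * a * b * a)) := by
  apply Units.ext
  rw [commutatorElement_def, commutatorElement_inv, commutatorElement_def, commutatorElement_def]
  have hinv : ∀ (p q : Fin n) (hpq : p ≠ q) (x : R),
      ((t p q hpq x)⁻¹ : GLn n R).val = 1 - single p q x := fun _ _ _ _ => rfl
  have hval : ∀ (p q : Fin n) (hpq : p ≠ q) (x : R),
      (t p q hpq x).val = 1 + single p q x := fun _ _ _ _ => rfl
  simp only [Units.val_mul, hinv, hval]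
  rw [inner_comm_val i j hij a b, inner_comm_val j i hij.symm b a]
  have := outer_comm_val i j h hij hhi hhj a b c
  calc (1 + single h i c) *
      (1 + single i i (a*b) + single i i (a*(b*(a*b)))
        - single j j (b*a) - single i j (a*(b*a)) + single j i (b*(a*b))) *
      (1 - single h i c) *
      (1 + single j j (b*a) + single j j (b*(a*(b*a)))
        - single i i (a*b) - single j i (b*(a*b)) + single i j (a*(b*a)))
      = (1 + single h i (c*a*b)) * (1 + single h j (-(c*a*b*a))) := this
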